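/- arXiv:2312.05570 — 2 statements merged into one kernel-verified Lean document; each statement's English description precedes it below -/
import Mathlib

section
/- Let (bₙ)_{n≥0} be a nonincreasing sequence of positive reals with bₙ → 0 and Σₙ 2ⁿ bₙ = ∞, and let x² : [0,1] → ℝ be the function that vanishes on the Cantor set C and on each removed middle-third interval I_{n,k} of level n equals 2·3^{n+1}·bₙ·dist(t, C) (a tent of height bₙ). Then for every c > 0, TV^c(x²,[0,1]) = Σ_{n≥0} 2^{n+1}·max(bₙ − c, 0). -/
/-!
Off the Cantor set, `x` is a sum of tents on the pairwise disjoint removed intervals, `2 ^ n`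
tents of height `b n` at level `n`; disjointness comes from writing the endpoints in base 3, where
the codes of the intervals have no digit `1`. For any such sum of tents of heights `h i`,
`TV^c = ∑ 2 (h i - c)⁺`. A partition through the endpoints and peaks of finitely many tents
collects `2 (h i - c)⁺` from each. Conversely, along any partition, the truncated increments plus
the variation still collectable in the current tent form a potential that grows only when a new
tent is entered, by at most `2 (h i - c)⁺`, and each tent is entered at most once.
-/

open scoped ENNReal
open Filter

/-- Truncated variation of `x` with parameter `c` on `[s,t]`. -/
noncomputable def truncVar (x : ℝ → ℝ) (c s t : ℝ) : ℝ≥0∞ :=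
  ⨆ (n : ℕ) (u : Fin (n + 1) → ℝ) (_ : Monotone u) (_ : u 0 = s)
    (_ : u (Fin.last n) = t),
    ∑ i : Fin n, ENNReal.ofReal (|x (u i.succ) - x (u i.castSucc)| - c)

/-- Left endpoint of the `k`-th (in increasing order, `k < 2ⁿ`) removed open
middle-third interval of level `n` in the Cantor construction. -/
noncomputable def cantorLeft (n k : ℕ) : ℝ :=
  (∑ i ∈ Finset.range n,
    (if Nat.testBit k (n - 1 - i) then (2 : ℝ) else 0) * (3 : ℝ) ^ (-((i : ℤ) + 1)))
    + (3 : ℝ) ^ (-((n : ℤ) + 1))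

/-- The `k`-th removed open interval `I_{n,k}` of level `n`, of length `3^{−(n+1)}`. -/
noncomputable def removedInterval (n k : ℕ) : Set ℝ :=
  Set.Ioo (cantorLeft n k) (cantorLeft n k + (3 : ℝ) ^ (-((n : ℤ) + 1)))

/-- The Cantor set: `[0,1]` minus all removed middle-third intervals. -/
noncomputable def cantorThirdsSet : Set ℝ :=
  Set.Icc 0 1 \ ⋃ (n : ℕ), ⋃ (k : ℕ) (_ : k < 2 ^ n), removedInterval n k

/-- `k_n(t)`: the number of level-`n` removed intervals entirely contained in `[0,t]`. -/
noncomputable def levelCount (n : ℕ) (t : ℝ) : ℕ :=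
  ((Finset.range (2 ^ n)).filter
    (fun k => cantorLeft n k + (3 : ℝ) ^ (-((n : ℤ) + 1)) ≤ t)).card


open Set Function
open scoped Finset

section TruncatedVariation

variable {x : ℝ → ℝ} {c s t : ℝ}

theorem ENNReal.ofReal_sub_add_ofReal_sub_le {p q : ℝ} (hc : 0 ≤ c) (hp : 0 ≤ p)
    (hq : 0 ≤ q) :
    ENNReal.ofReal (p - c) + ENNReal.ofReal (q - c) ≤ ENNReal.ofReal (p + q - c) := by
  rcases le_or_gt p c with hpc | hpc
  · rw [ENNReal.ofReal_of_nonpos (by linarith), zero_add]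
    exact ENNReal.ofReal_le_ofReal (by linarith)
  rcases le_or_gt q c with hqc | hqc
  · rw [ENNReal.ofReal_of_nonpos (by linarith : q - c ≤ 0), add_zero]
    exact ENNReal.ofReal_le_ofReal (by linarith)
  rw [← ENNReal.ofReal_add (by linarith) (by linarith)]
  exact ENNReal.ofReal_le_ofReal (by linarith)

theorem ENNReal.ofReal_abs_sub_sub_le {p q : ℝ} (hp : 0 ≤ p) (hq : 0 ≤ q) :
    ENNReal.ofReal (|p - q| - c) ≤ ENNReal.ofReal (p - c) + ENNReal.ofReal (q - c) := by
  rcases le_total p q with hpq | hpq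
  · refine (ENNReal.ofReal_le_ofReal ?_).trans le_add_self
    rw [abs_sub_comm, abs_of_nonneg (by linarith)]
    linarith
  · refine (ENNReal.ofReal_le_ofReal ?_).trans le_self_add
    rw [abs_of_nonneg (by linarith)]
    linarith

theorem sum_add_le_add_sum_of_potential {α : Type*} [AddCommMonoid α] [PartialOrder α]
    [IsOrderedAddMonoid α] {N : ℕ} (a e : Fin N → α) (Φ : Fin (N + 1) → α)
    (h : ∀ i, a i + Φ i.succ ≤ Φ i.castSucc + e i) :
    ∑ i, a i + Φ (Fin.last N) ≤ Φ 0 + ∑ i, e i := by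
  induction N with
  | zero => simp
  | succ N ih =>
    have ih' : ∑ i : Fin N, a i.castSucc + Φ (Fin.last N).castSucc
        ≤ Φ 0 + ∑ i : Fin N, e i.castSucc :=
      ih _ _ (Φ ∘ Fin.castSucc) fun i => by
        simpa only [comp_apply, Fin.succ_castSucc] using h i.castSucc
    rw [Fin.sum_univ_castSucc, Fin.sum_univ_castSucc]
    calc ∑ i : Fin N, a i.castSucc + a (Fin.last N) + Φ (Fin.last (N + 1))
        ≤ ∑ i : Fin N, a i.castSucc + (Φ (Fin.last N).castSucc + e (Fin.last N)) := by
          rw [add_assoc]; exact add_le_add le_rfl (h _)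
      _ ≤ Φ 0 + ∑ i : Fin N, e i.castSucc + e (Fin.last N) := by
          rw [← add_assoc]; exact add_le_add ih' le_rfl
      _ = Φ 0 + (∑ i : Fin N, e i.castSucc + e (Fin.last N)) := add_assoc _ _ _

theorem Monotone.card_filter_enter_le_one {α : Type*} [Preorder α] {N : ℕ}
    {u : Fin (N + 1) → α} (hu : Monotone u) {S : Set α} [DecidablePred (· ∈ S)]
    (hS : S.OrdConnected) :
    #{j : Fin N | u j.succ ∈ S ∧ u j.castSucc ∉ S} ≤ 1 := by
  refine Finset.card_le_one.2 fun i hi j hj => ?_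
  simp only [Finset.mem_filter, Finset.mem_univ, true_and] at hi hj
  have key (i j : Fin N) (hi : u i.succ ∈ S) (hj : u j.succ ∈ S) (hj' : u j.castSucc ∉ S) :
      ¬ i < j := fun hij =>
    hj' (hS.out hi hj ⟨hu (Fin.castSucc_lt_iff_succ_le.1 (Fin.castSucc_lt_castSucc_iff.2 hij)),
      hu (Fin.castSucc_le_succ j)⟩)
  rcases lt_trichotomy i j with hij | rfl | hij
  · exact absurd hij (key i j hi.1 hj.1 hj.2)
  · rfl
  · exact absurd hij (key j i hj.1 hi.1 hi.2)

theorem StrictMono.exists_castSucc_succ_eq {α : Type*} [LinearOrder α] {N : ℕ}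
    {u : Fin (N + 1) → α} (hu : StrictMono u) {p q : α} (hp : p ∈ range u)
    (hq : q ∈ range u) (hpq : p < q) (hgap : ∀ j, u j ∉ Ioo p q) :
    ∃ j : Fin N, u j.castSucc = p ∧ u j.succ = q := by
  obtain ⟨i, rfl⟩ := hp
  obtain ⟨k, rfl⟩ := hq
  have hik : i < k := hu.lt_iff_lt.1 hpq
  obtain ⟨j, rfl⟩ := Fin.exists_castSucc_eq.2 (Fin.ne_last_of_lt hik)
  refine ⟨j, rfl, ?_⟩
  rcases (Fin.castSucc_lt_iff_succ_le.1 hik).eq_or_lt with hjk | hjk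
  · rw [hjk]
  · exact absurd ⟨hu Fin.castSucc_lt_succ, hu hjk⟩ (hgap j.succ)

theorem left_notMem_Ioo_of_pairwise_disjoint {ι : Type*} {a b : ι → ℝ}
    (hab : ∀ i, a i < b i) (hd : Pairwise (Disjoint on fun i => Ioo (a i) (b i))) (i j : ι) :
    a i ∉ Ioo (a j) (b j) := by
  intro hi
  rcases eq_or_ne i j with rfl | hij
  · exact lt_irrefl _ hi.1
  have hlt : a i < min (b i) (b j) := lt_min (hab i) hi.2
  have hi' : (a i + min (b i) (b j)) / 2 ∈ Ioo (a i) (b i) :=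
    ⟨by linarith, by linarith [min_le_left (b i) (b j)]⟩
  have hj' : (a i + min (b i) (b j)) / 2 ∈ Ioo (a j) (b j) :=
    ⟨by linarith [hi.1], by linarith [min_le_right (b i) (b j)]⟩
  exact Set.disjoint_left.1 (hd hij) hi' hj'

theorem right_notMem_Ioo_of_pairwise_disjoint {ι : Type*} {a b : ι → ℝ}
    (hab : ∀ i, a i < b i) (hd : Pairwise (Disjoint on fun i => Ioo (a i) (b i))) (i j : ι) :
    b i ∉ Ioo (a j) (b j) := by
  intro hi
  rcases eq_or_ne i j with rfl | hij
  · exact lt_irrefl _ hi.2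
  have hlt : max (a i) (a j) < b i := max_lt (hab i) hi.1
  have hi' : (max (a i) (a j) + b i) / 2 ∈ Ioo (a i) (b i) :=
    ⟨by linarith [le_max_left (a i) (a j)], by linarith⟩
  have hj' : (max (a i) (a j) + b i) / 2 ∈ Ioo (a j) (b j) :=
    ⟨by linarith [le_max_right (a i) (a j)], by linarith [hi.2]⟩
  exact Set.disjoint_left.1 (hd hij) hi' hj'

theorem sum_le_truncVar_of_consecutive (P : Finset ℝ) (hsP : s ∈ P) (htP : t ∈ P)
    (hP : ∀ z ∈ P, s ≤ z ∧ z ≤ t) (Q : Finset (ℝ × ℝ))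
    (hQ : ∀ q ∈ Q, q.1 ∈ P ∧ q.2 ∈ P ∧ q.1 < q.2 ∧ ∀ z ∈ P, z ∉ Ioo q.1 q.2) :
    ∑ q ∈ Q, ENNReal.ofReal (|x q.2 - x q.1| - c) ≤ truncVar x c s t := by
  classical
  obtain ⟨N, hN⟩ : ∃ N, P.card = N + 1 :=
    Nat.exists_eq_add_one.2 (Finset.card_pos.2 ⟨s, hsP⟩)
  set u := P.orderEmbOfFin hN
  have hu0 : u 0 = s := by
    refine (Finset.orderEmbOfFin_zero hN N.succ_pos).trans (le_antisymm ?_ ?_)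
    exacts [P.min'_le s hsP, P.le_min' _ s fun z hz => (hP z hz).1]
  have huN : u (Fin.last N) = t := by
    refine (Finset.orderEmbOfFin_last hN N.succ_pos).trans (le_antisymm ?_ ?_)
    exacts [P.max'_le _ t fun z hz => (hP z hz).2, P.le_max' t htP]
  have hQsub : Q ⊆ Finset.univ.image fun j : Fin N => (u j.castSucc, u j.succ) := by
    intro q hq
    obtain ⟨h₁, h₂, hlt, hgap⟩ := hQ q hq
    rw [← Finset.mem_coe, ← Finset.range_orderEmbOfFin P hN] at h₁ h₂
    obtain ⟨j, hj₁, hj₂⟩ := u.strictMono.exists_castSucc_succ_eq h₁ h₂ hlt fun j =>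
      hgap _ (P.orderEmbOfFin_mem hN j)
    exact Finset.mem_image.2 ⟨j, Finset.mem_univ _, Prod.ext hj₁ hj₂⟩
  calc ∑ q ∈ Q, ENNReal.ofReal (|x q.2 - x q.1| - c)
      ≤ ∑ q ∈ Finset.univ.image fun j : Fin N => (u j.castSucc, u j.succ),
          ENNReal.ofReal (|x q.2 - x q.1| - c) := Finset.sum_le_sum_of_subset hQsub
    _ ≤ ∑ j : Fin N, ENNReal.ofReal (|x (u j.succ) - x (u j.castSucc)| - c) :=
        Finset.sum_image_le_of_nonneg fun _ _ => zero_le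
    _ ≤ truncVar x c s t :=
        le_iSup_of_le N <| le_iSup_of_le u <| le_iSup_of_le u.monotone <|
          le_iSup_of_le hu0 <| le_iSup_of_le huN le_rfl

theorem sum_le_truncVar {ι : Type*} {a b : ι → ℝ} (hab : ∀ i, a i < b i)
    (hs : ∀ i, s ≤ a i) (ht : ∀ i, b i ≤ t)
    (hd : Pairwise (Disjoint on fun i => Ioo (a i) (b i))) (F : Finset ι) :
    ∑ i ∈ F, ENNReal.ofReal (|x (b i) - x (a i)| - c) ≤ truncVar x c s t := by
  classical
  rcases F.eq_empty_or_nonempty with rfl | ⟨i₀, -⟩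
  · simp
  have hinj : InjOn (fun i => (a i, b i)) F := fun i _ i' _ hii' => by
    obtain ⟨ha, hb⟩ := Prod.mk.inj hii'
    by_contra hne
    have hmid : (a i + b i) / 2 ∈ Ioo (a i) (b i) :=
      ⟨by linarith [hab i], by linarith [hab i]⟩
    exact Set.disjoint_left.1 (hd hne) hmid (show _ ∈ Ioo (a i') (b i') by rwa [← ha, ← hb])
  let P : Finset ℝ := insert s (insert t (F.image a ∪ F.image b))
  have hst : s ≤ t := (hs i₀).trans ((hab i₀).le.trans (ht i₀))
  have hP : ∀ z ∈ P, s ≤ z ∧ z ≤ t := by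
    simp only [P, Finset.mem_insert, Finset.mem_union, Finset.mem_image]
    rintro z (rfl | rfl | ⟨i, -, rfl⟩ | ⟨i, -, rfl⟩)
    exacts [⟨le_rfl, hst⟩, ⟨hst, le_rfl⟩, ⟨hs i, (hab i).le.trans (ht i)⟩,
      ⟨(hs i).trans (hab i).le, ht i⟩]
  rw [← Finset.sum_image (g := fun i => (a i, b i))
    (f := fun q : ℝ × ℝ => ENNReal.ofReal (|x q.2 - x q.1| - c)) hinj]
  refine sum_le_truncVar_of_consecutive P (by simp [P]) (by simp [P]) hP _ fun q hq => ?_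
  obtain ⟨i, hi, rfl⟩ := Finset.mem_image.1 hq
  refine ⟨Finset.mem_insert_of_mem (Finset.mem_insert_of_mem
      (Finset.mem_union_left _ (Finset.mem_image_of_mem a hi))),
    Finset.mem_insert_of_mem (Finset.mem_insert_of_mem
      (Finset.mem_union_right _ (Finset.mem_image_of_mem b hi))), hab i, fun z hz => ?_⟩
  simp only [P, Finset.mem_insert, Finset.mem_union, Finset.mem_image] at hz
  rcases hz with rfl | rfl | ⟨k, -, rfl⟩ | ⟨k, -, rfl⟩
  · exact fun hz => (hs i).not_gt hz.1
  · exact fun hz => (ht i).not_gt hz.2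
  · exact left_notMem_Ioo_of_pairwise_disjoint hab hd k i
  · exact right_notMem_Ioo_of_pairwise_disjoint hab hd k i

end TruncatedVariation

noncomputable def tent (l r h y : ℝ) : ℝ := 2 * h / (r - l) * min (y - l) (r - y)

section Tent

variable {l r h : ℝ}

theorem tent_nonneg (hh : 0 ≤ h) {y : ℝ} (hy : y ∈ Icc l r) : 0 ≤ tent l r h y :=
  mul_nonneg (div_nonneg (by positivity) (by linarith [hy.1, hy.2]))
    (le_min (by linarith [hy.1]) (by linarith [hy.2]))

theorem tent_le (hh : 0 ≤ h) (hlr : l < r) (y : ℝ) : tent l r h y ≤ h := by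
  have hmin : min (y - l) (r - y) ≤ (r - l) / 2 := by
    rcases le_total (y - l) (r - y) with hle | hle
    · rw [min_eq_left hle]; linarith
    · rw [min_eq_right hle]; linarith
  calc tent l r h y ≤ 2 * h / (r - l) * ((r - l) / 2) :=
        mul_le_mul_of_nonneg_left hmin (div_nonneg (by positivity) (by linarith))
    _ = h := by field_simp [(sub_pos.2 hlr).ne']

theorem tent_midpoint (hlr : l < r) : tent l r h ((l + r) / 2) = h := by
  rw [tent, show (l + r) / 2 - l = (r - l) / 2 by ring, show r - (l + r) / 2 = (r - l) / 2 by ring,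
    min_self]
  field_simp [(sub_pos.2 hlr).ne']

theorem tent_monotoneOn (hh : 0 ≤ h) (hlr : l ≤ r) :
    MonotoneOn (tent l r h) (Iic ((l + r) / 2)) := fun y _ y' hy' hyy' =>
  mul_le_mul_of_nonneg_left
    (le_min ((min_le_left _ _).trans (by linarith))
      ((min_le_left _ _).trans (by linarith [mem_Iic.1 hy'])))
    (div_nonneg (by positivity) (by linarith))

theorem tent_antitoneOn (hh : 0 ≤ h) (hlr : l ≤ r) :
    AntitoneOn (tent l r h) (Ici ((l + r) / 2)) := fun y hy y' _ hyy' =>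
  mul_le_mul_of_nonneg_left
    (le_min ((min_le_right _ _).trans (by linarith [mem_Ici.1 hy]))
      ((min_le_right _ _).trans (by linarith)))
    (div_nonneg (by positivity) (by linarith))

end Tent

/-- The largest truncated variation that a partition currently at `y` can still collect before
leaving a tent of height `h` with peak at `m`: climb to the peak (if not yet past it), then descend
to `0`. -/
noncomputable def tentPotential (x : ℝ → ℝ) (c m h y : ℝ) : ℝ≥0∞ :=
  if y ≤ m then ENNReal.ofReal (h - c) + ENNReal.ofReal (h - x y - c)
  else ENNReal.ofReal (x y - c)

section TentPotential

variable {x : ℝ → ℝ} {c m h y y' : ℝ}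

theorem ofReal_sub_le_tentPotential (hyh : x y ≤ h) :
    ENNReal.ofReal (x y - c) ≤ tentPotential x c m h y := by
  unfold tentPotential
  split_ifs
  · exact (ENNReal.ofReal_le_ofReal (by linarith)).trans le_self_add
  · exact le_rfl

theorem ofReal_sub_add_tentPotential_le (hc : 0 ≤ c) (hy : 0 ≤ x y) (hyh : x y ≤ h) :
    ENNReal.ofReal (x y - c) + tentPotential x c m h y ≤ 2 * ENNReal.ofReal (h - c) := by
  unfold tentPotential
  split_ifs
  · calc ENNReal.ofReal (x y - c) + (ENNReal.ofReal (h - c) + ENNReal.ofReal (h - x y - c))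
        = ENNReal.ofReal (h - c) + (ENNReal.ofReal (x y - c) + ENNReal.ofReal (h - x y - c)) := by
          ring
      _ ≤ ENNReal.ofReal (h - c) + ENNReal.ofReal (x y + (h - x y) - c) :=
          add_le_add le_rfl (ENNReal.ofReal_sub_add_ofReal_sub_le hc hy (by linarith))
      _ = 2 * ENNReal.ofReal (h - c) := by rw [add_sub_cancel, two_mul]
  · rw [← two_mul]
    gcongr

theorem ofReal_abs_sub_sub_add_tentPotential_le (hc : 0 ≤ c) (hy' : 0 ≤ x y')
    (hyh : x y ≤ h) (hy'h : x y' ≤ h) (hyy' : y ≤ y') (hleft : y' ≤ m → x y ≤ x y')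
    (hright : m < y → x y' ≤ x y) :
    ENNReal.ofReal (|x y' - x y| - c) + tentPotential x c m h y' ≤ tentPotential x c m h y := by
  have descent : x y' ≤ x y →
      ENNReal.ofReal (|x y' - x y| - c) + ENNReal.ofReal (x y' - c) ≤ ENNReal.ofReal (x y - c) :=
    fun hle => by
      rw [abs_sub_comm, abs_of_nonneg (by linarith)]
      simpa using ENNReal.ofReal_sub_add_ofReal_sub_le (p := x y - x y') hc (by linarith) hy'
  unfold tentPotential
  split_ifs with h₁ h₂ h₂
  · rw [abs_of_nonneg (sub_nonneg.2 (hleft h₁)), add_left_comm]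
    refine add_le_add le_rfl ?_
    simpa using ENNReal.ofReal_sub_add_ofReal_sub_le (q := h - x y') hc (sub_nonneg.2 (hleft h₁))
      (by linarith)
  · exact absurd (hyy'.trans h₁) h₂
  · rcases le_total (x y) (x y') with hle | hle
    · rw [add_comm]
      refine add_le_add (ENNReal.ofReal_le_ofReal (by linarith)) (ENNReal.ofReal_le_ofReal ?_)
      rw [abs_of_nonneg (by linarith)]
      linarith
    · exact (descent hle).trans ((ENNReal.ofReal_le_ofReal (by linarith)).trans le_self_add)
  · exact descent (hright (lt_of_not_ge h₂))

end TentPotential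

structure IsSumOfTents {ι : Type*} (x : ℝ → ℝ) (s t : ℝ) (l r h : ι → ℝ) : Prop where
  lt : ∀ i, l i < r i
  le_left : ∀ i, s ≤ l i
  right_le : ∀ i, r i ≤ t
  pairwise_disjoint : Pairwise (Disjoint on fun i => Ioo (l i) (r i))
  height_nonneg : ∀ i, 0 ≤ h i
  eq_tent : ∀ i, ∀ y ∈ Ioo (l i) (r i), x y = tent (l i) (r i) (h i) y
  eq_zero : ∀ y ∈ Icc s t, (∀ i, y ∉ Ioo (l i) (r i)) → x y = 0

noncomputable def tentsPotential {ι : Type*} (x : ℝ → ℝ) (c : ℝ) (l r h : ι → ℝ)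
    (y : ℝ) : ℝ≥0∞ :=
  ∑' i, (Ioo (l i) (r i)).indicator (tentPotential x c ((l i + r i) / 2) (h i)) y

theorem tentsPotential_eq_zero {ι : Type*} {x : ℝ → ℝ} {c y : ℝ} {l r h : ι → ℝ}
    (hy : ∀ i, y ∉ Ioo (l i) (r i)) : tentsPotential x c l r h y = 0 := by
  simp [tentsPotential, indicator_of_notMem (hy _)]

namespace IsSumOfTents

variable {ι : Type*} {x : ℝ → ℝ} {s t c y y' : ℝ} {l r h : ι → ℝ}

theorem eq_of_mem (hT : IsSumOfTents x s t l r h) {i j : ι} (hi : y ∈ Ioo (l i) (r i))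
    (hj : y ∈ Ioo (l j) (r j)) : i = j :=
  by_contra fun hne => Set.disjoint_left.1 (hT.pairwise_disjoint hne) hi hj

theorem nonneg (hT : IsSumOfTents x s t l r h) (hy : y ∈ Icc s t) : 0 ≤ x y := by
  by_cases hin : ∃ i, y ∈ Ioo (l i) (r i)
  · obtain ⟨i, hi⟩ := hin
    rw [hT.eq_tent i y hi]
    exact tent_nonneg (hT.height_nonneg i) (Ioo_subset_Icc_self hi)
  · push Not at hin
    rw [hT.eq_zero y hy hin]

theorem le_height (hT : IsSumOfTents x s t l r h) {i : ι} (hi : y ∈ Ioo (l i) (r i)) :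
    x y ≤ h i := by
  rw [hT.eq_tent i y hi]
  exact tent_le (hT.height_nonneg i) (hT.lt i) y

theorem tentsPotential_eq (hT : IsSumOfTents x s t l r h) {i : ι} (hi : y ∈ Ioo (l i) (r i)) :
    tentsPotential x c l r h y = tentPotential x c ((l i + r i) / 2) (h i) y := by
  rw [tentsPotential, tsum_eq_single i fun j hj =>
    indicator_of_notMem (fun hj' => hj (hT.eq_of_mem hj' hi)) _, indicator_of_mem hi]

theorem ofReal_sub_le_tentsPotential (hT : IsSumOfTents x s t l r h) (hc : 0 ≤ c)
    (hy : y ∈ Icc s t) : ENNReal.ofReal (x y - c) ≤ tentsPotential x c l r h y := by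
  by_cases hin : ∃ i, y ∈ Ioo (l i) (r i)
  · obtain ⟨i, hi⟩ := hin
    rw [hT.tentsPotential_eq hi]
    exact ofReal_sub_le_tentPotential (hT.le_height hi)
  · push Not at hin
    rw [hT.eq_zero y hy hin, zero_sub, ENNReal.ofReal_of_nonpos (by linarith)]
    exact zero_le

theorem ofReal_abs_sub_sub_add_tentsPotential_le (hT : IsSumOfTents x s t l r h) (hc : 0 ≤ c)
    (hy : y ∈ Icc s t) (hy' : y' ∈ Icc s t) (hyy' : y ≤ y') :
    ENNReal.ofReal (|x y' - x y| - c) + tentsPotential x c l r h y'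
      ≤ tentsPotential x c l r h y +
        ∑' i, if y' ∈ Ioo (l i) (r i) ∧ y ∉ Ioo (l i) (r i) then
          2 * ENNReal.ofReal (h i - c) else 0 := by
  by_cases hin : ∃ j, y' ∈ Ioo (l j) (r j)
  swap
  · push Not at hin
    rw [tentsPotential_eq_zero hin, hT.eq_zero y' hy' hin, zero_sub, abs_neg,
      abs_of_nonneg (hT.nonneg hy), add_zero]
    exact (hT.ofReal_sub_le_tentsPotential hc hy).trans le_self_add
  obtain ⟨j, hj⟩ := hin
  by_cases hyj : y ∈ Ioo (l j) (r j)
  · have hh := hT.height_nonneg j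
    have hlr := (hT.lt j).le
    rw [hT.tentsPotential_eq hj, hT.tentsPotential_eq hyj]
    refine (ofReal_abs_sub_sub_add_tentPotential_le hc (hT.nonneg hy') (hT.le_height hyj)
      (hT.le_height hj) hyy' (fun hy'm => ?_) (fun hmy => ?_)).trans le_self_add
    · rw [hT.eq_tent j y hyj, hT.eq_tent j y' hj]
      exact tent_monotoneOn hh hlr (mem_Iic.2 (hyy'.trans hy'm)) hy'm hyy'
    · rw [hT.eq_tent j y hyj, hT.eq_tent j y' hj]
      exact tent_antitoneOn hh hlr (mem_Ici.2 hmy.le) (mem_Ici.2 (hmy.le.trans hyy')) hyy'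
  -- entering a new tent: pass through an imaginary zero in between
  calc ENNReal.ofReal (|x y' - x y| - c) + tentsPotential x c l r h y'
      ≤ ENNReal.ofReal (x y - c) + (ENNReal.ofReal (x y' - c) + tentsPotential x c l r h y') := by
        rw [← add_assoc]
        exact add_le_add (ENNReal.ofReal_abs_sub_sub_le (hT.nonneg hy') (hT.nonneg hy) |>.trans
          (add_comm _ _).le) le_rfl
    _ ≤ tentsPotential x c l r h y + 2 * ENNReal.ofReal (h j - c) := by
        refine add_le_add (hT.ofReal_sub_le_tentsPotential hc hy) ?_
        rw [hT.tentsPotential_eq hj]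
        exact ofReal_sub_add_tentPotential_le hc (hT.nonneg hy') (hT.le_height hj)
    _ ≤ _ := add_le_add le_rfl ((if_pos ⟨hj, hyj⟩).symm.le.trans (ENNReal.le_tsum j))

theorem truncVar_le (hT : IsSumOfTents x s t l r h) (hc : 0 ≤ c) :
    truncVar x c s t ≤ ∑' i, 2 * ENNReal.ofReal (h i - c) := by
  classical
  refine iSup_le fun N => iSup_le fun u => iSup_le fun hu => iSup_le fun hu0 =>
    iSup_le fun huN => ?_
  have hmem (j) : u j ∈ Icc s t := ⟨hu0 ▸ hu (Fin.zero_le j), huN ▸ hu (Fin.le_last j)⟩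
  calc ∑ j : Fin N, ENNReal.ofReal (|x (u j.succ) - x (u j.castSucc)| - c)
      ≤ ∑ j : Fin N, ENNReal.ofReal (|x (u j.succ) - x (u j.castSucc)| - c)
        + tentsPotential x c l r h (u (Fin.last N)) := le_self_add
    _ ≤ tentsPotential x c l r h (u 0) + ∑ j : Fin N, ∑' i,
          if u j.succ ∈ Ioo (l i) (r i) ∧ u j.castSucc ∉ Ioo (l i) (r i) then
            2 * ENNReal.ofReal (h i - c) else 0 :=
        sum_add_le_add_sum_of_potential _ _ (fun j => tentsPotential x c l r h (u j)) fun j =>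
          hT.ofReal_abs_sub_sub_add_tentsPotential_le hc (hmem _) (hmem _)
            (hu (Fin.castSucc_le_succ j))
    _ ≤ ∑' i, 2 * ENNReal.ofReal (h i - c) := by
        rw [hu0, tentsPotential_eq_zero fun i hi => (hT.le_left i).not_gt hi.1, zero_add,
          ← Summable.tsum_finsetSum fun _ _ => ENNReal.summable]
        refine ENNReal.tsum_le_tsum fun i => ?_
        rw [Finset.sum_ite, Finset.sum_const_zero, add_zero, Finset.sum_const]
        exact (nsmul_le_nsmul_left zero_le
          (hu.card_filter_enter_le_one ordConnected_Ioo)).trans (one_nsmul _).le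

theorem apply_left (hT : IsSumOfTents x s t l r h) (i : ι) : x (l i) = 0 :=
  hT.eq_zero _ ⟨hT.le_left i, (hT.lt i).le.trans (hT.right_le i)⟩
    fun j => left_notMem_Ioo_of_pairwise_disjoint hT.lt hT.pairwise_disjoint i j

theorem apply_right (hT : IsSumOfTents x s t l r h) (i : ι) : x (r i) = 0 :=
  hT.eq_zero _ ⟨(hT.le_left i).trans (hT.lt i).le, hT.right_le i⟩
    fun j => right_notMem_Ioo_of_pairwise_disjoint hT.lt hT.pairwise_disjoint i j

theorem apply_midpoint (hT : IsSumOfTents x s t l r h) (i : ι) : x ((l i + r i) / 2) = h i := by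
  rw [hT.eq_tent i _ ⟨by linarith [hT.lt i], by linarith [hT.lt i]⟩, tent_midpoint (hT.lt i)]

theorem le_truncVar (hT : IsSumOfTents x s t l r h) :
    ∑' i, 2 * ENNReal.ofReal (h i - c) ≤ truncVar x c s t := by
  classical
  let a : ι × Bool → ℝ := fun p => if p.2 then (l p.1 + r p.1) / 2 else l p.1
  let b : ι × Bool → ℝ := fun p => if p.2 then r p.1 else (l p.1 + r p.1) / 2
  have hab : ∀ p, a p < b p := fun ⟨i, β⟩ => by
    cases β <;> simp only [a, b, Bool.false_eq_true, if_true, if_false] <;> linarith [hT.lt i]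
  have hla : ∀ p, l p.1 ≤ a p := fun p => by simp only [a]; split_ifs <;> linarith [hT.lt p.1]
  have hbr : ∀ p, b p ≤ r p.1 := fun p => by simp only [b]; split_ifs <;> linarith [hT.lt p.1]
  have hd : Pairwise (Disjoint on fun p => Ioo (a p) (b p)) := by
    rintro ⟨i, β⟩ ⟨j, β'⟩ hne
    rcases eq_or_ne i j with rfl | hij
    · have hββ' : β ≠ β' := fun h => hne (h ▸ rfl)
      refine Set.disjoint_left.2 fun y hy hy' => ?_
      cases β <;> cases β' <;> simp_all [a, b] <;> linarith
    · exact (hT.pairwise_disjoint hij).mono (Ioo_subset_Ioo (hla _) (hbr _))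
        (Ioo_subset_Ioo (hla _) (hbr _))
  rw [ENNReal.tsum_eq_iSup_sum]
  refine iSup_le fun F => ?_
  calc ∑ i ∈ F, 2 * ENNReal.ofReal (h i - c)
      = ∑ p ∈ F ×ˢ Finset.univ, ENNReal.ofReal (|x (b p) - x (a p)| - c) := by
        rw [Finset.sum_product]
        refine Finset.sum_congr rfl fun i _ => ?_
        simp [a, b, hT.apply_left, hT.apply_right, hT.apply_midpoint,
          abs_of_nonneg (hT.height_nonneg i), two_mul]
    _ ≤ truncVar x c s t :=
        sum_le_truncVar hab (fun p => (hT.le_left p.1).trans (hla p))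
          (fun p => (hbr p).trans (hT.right_le p.1)) hd _

theorem truncVar_eq (hT : IsSumOfTents x s t l r h) (hc : 0 ≤ c) :
    truncVar x c s t = ∑' i, 2 * ENNReal.ofReal (h i - c) :=
  le_antisymm (hT.truncVar_le hc) hT.le_truncVar

end IsSumOfTents

/-- The number whose ternary digits are twice the last `n` binary digits of `k`, so that
`cantorLeft n k = (3 * cantorCode n k + 1) / 3 ^ (n + 1)`. -/
def cantorCode : ℕ → ℕ → ℕ
  | 0, _ => 0
  | n + 1, k => 2 * (k % 2) + 3 * cantorCode n (k / 2)

theorem cantorCode_lt (n k : ℕ) : cantorCode n k < 3 ^ n := by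
  induction n generalizing k with
  | zero => simp [cantorCode]
  | succ n ih =>
    have := ih (k / 2)
    rw [cantorCode, pow_succ]
    omega

theorem cantorCode_div_pow_mod_three_ne_one (n k i : ℕ) : cantorCode n k / 3 ^ i % 3 ≠ 1 := by
  induction n generalizing k i with
  | zero => simp [cantorCode]
  | succ n ih =>
    cases i with
    | zero => rw [cantorCode]; omega
    | succ i =>
      rw [cantorCode, pow_succ', ← Nat.div_div_eq_div_mul,
        show (2 * (k % 2) + 3 * cantorCode n (k / 2)) / 3 = cantorCode n (k / 2) by omega]
      exact ih _ i

theorem cantorCode_inj {n k j : ℕ} (hk : k < 2 ^ n) (hj : j < 2 ^ n)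
    (h : cantorCode n k = cantorCode n j) : k = j := by
  induction n generalizing k j with
  | zero => simp_all
  | succ n ih =>
    rw [cantorCode, cantorCode] at h
    rw [pow_succ] at hk hj
    have := ih (k := k / 2) (j := j / 2) (by omega) (by omega) (by omega)
    omega

/-- In units of `3 ^ -(m + 1)`, the removed intervals of level `m - Q` with code `D` and of
level `m` with code `E`. If they overlap and `Q > 0`, then `E / 3 ^ (Q - 1) = 3 * D + 1` would
end in the ternary digit `1`. -/
theorem eq_of_ternary_gaps_overlap {D E Q : ℕ} (hE : ∀ i, E / 3 ^ i % 3 ≠ 1)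
    (h₁ : (3 * D + 1) * 3 ^ Q < 3 * E + 2) (h₂ : 3 * E + 1 < (3 * D + 2) * 3 ^ Q) :
    Q = 0 ∧ D = E := by
  cases Q with
  | zero => simp only [pow_zero, mul_one] at h₁ h₂; omega
  | succ Q =>
    exfalso
    rw [pow_succ, ← mul_assoc] at h₁ h₂
    have hlo : (3 * D + 1) * 3 ^ Q ≤ E := by omega
    have hhi : E < (3 * D + 1 + 1) * 3 ^ Q := by rw [show 3 * D + 1 + 1 = 3 * D + 2 by ring]; omega
    have := hE Q
    rw [Nat.div_eq_of_lt_le hlo hhi] at this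
    omega

theorem three_zpow_neg (n : ℕ) : (3 : ℝ) ^ (-((n : ℤ) + 1)) = ((3 : ℝ) ^ (n + 1))⁻¹ := by
  rw [zpow_neg, ← Nat.cast_succ, zpow_natCast]

theorem sum_binaryDigits_eq_cantorCode_div (n k : ℕ) :
    ∑ i ∈ Finset.range n,
      (if Nat.testBit k (n - 1 - i) then (2 : ℝ) else 0) * (3 : ℝ) ^ (-((i : ℤ) + 1))
      = cantorCode n k / 3 ^ n := by
  induction n generalizing k with
  | zero => simp [cantorCode]
  | succ n ih =>
    rw [Finset.sum_range_succ, Nat.add_sub_cancel, Nat.sub_self, Nat.testBit_zero]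
    rw [Finset.sum_congr rfl fun i hi => by
      rw [show n - i = (n - 1 - i) + 1 by have := Finset.mem_range.1 hi; omega, Nat.testBit_succ],
      ih (k / 2)]
    rw [three_zpow_neg, cantorCode]
    rcases Nat.mod_two_eq_zero_or_one k with hk | hk <;> simp [hk] <;> field_simp <;> ring

theorem cantorLeft_eq (n k : ℕ) : cantorLeft n k = (3 * cantorCode n k + 1) / 3 ^ (n + 1) := by
  rw [cantorLeft, sum_binaryDigits_eq_cantorCode_div, three_zpow_neg]
  field_simp
  ring

noncomputable def cantorRight (n k : ℕ) : ℝ := cantorLeft n k + (3 : ℝ) ^ (-((n : ℤ) + 1))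

theorem cantorRight_eq (n k : ℕ) : cantorRight n k = (3 * cantorCode n k + 2) / 3 ^ (n + 1) := by
  rw [cantorRight, cantorLeft_eq, three_zpow_neg]
  field_simp
  ring

theorem cantorLeft_lt_cantorRight (n k : ℕ) : cantorLeft n k < cantorRight n k :=
  lt_add_of_pos_right _ (by positivity)

theorem cantorLeft_nonneg (n k : ℕ) : 0 ≤ cantorLeft n k := by
  rw [cantorLeft_eq]
  positivity

theorem cantorRight_le_one (n k : ℕ) : cantorRight n k ≤ 1 := by
  have h : 3 * cantorCode n k + 2 ≤ 3 ^ (n + 1) := by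
    have := cantorCode_lt n k
    rw [pow_succ]
    omega
  rw [cantorRight_eq, div_le_one (by positivity)]
  exact_mod_cast h

theorem removedInterval_eq_Ioo_div {n m : ℕ} (hnm : n ≤ m) (k : ℕ) :
    removedInterval n k = Ioo (((3 * cantorCode n k + 1) * 3 ^ (m - n) : ℕ) / 3 ^ (m + 1) : ℝ)
      (((3 * cantorCode n k + 2) * 3 ^ (m - n) : ℕ) / 3 ^ (m + 1)) := by
  have h3 : (3 : ℝ) ^ (m + 1) = 3 ^ (n + 1) * 3 ^ (m - n) := by
    rw [← pow_add]; congr 1; omega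
  rw [removedInterval, ← cantorRight, cantorLeft_eq, cantorRight_eq, h3]
  push_cast
  rw [mul_div_mul_right _ _ (by positivity), mul_div_mul_right _ _ (by positivity)]

theorem removedInterval_disjoint {n m k j : ℕ} (hk : k < 2 ^ n) (hj : j < 2 ^ m)
    (hne : (n, k) ≠ (m, j)) : Disjoint (removedInterval n k) (removedInterval m j) := by
  wlog hnm : n ≤ m generalizing n m k j
  · exact (this hj hk hne.symm (le_of_not_ge hnm)).symm
  rw [removedInterval_eq_Ioo_div hnm, removedInterval_eq_Ioo_div le_rfl]
  simp only [Nat.sub_self, pow_zero, mul_one]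
  refine Set.disjoint_left.2 fun y hy hy' => ?_
  have hpos : (0 : ℝ) < 3 ^ (m + 1) := by positivity
  obtain ⟨hQ, hDE⟩ := eq_of_ternary_gaps_overlap (D := cantorCode n k) (Q := m - n)
    (cantorCode_div_pow_mod_three_ne_one m j)
    (by exact_mod_cast (div_lt_div_iff_of_pos_right hpos).1 (hy.1.trans hy'.2))
    (by exact_mod_cast (div_lt_div_iff_of_pos_right hpos).1 (hy'.1.trans hy.2))
  obtain rfl : n = m := by omega
  exact hne (by rw [cantorCode_inj hk hj hDE])

theorem pairwise_disjoint_removedInterval : Pairwise (Disjoint on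
    fun p : (n : ℕ) × Fin (2 ^ n) => Ioo (cantorLeft p.1 p.2) (cantorRight p.1 p.2)) := by
  rintro ⟨n, k⟩ ⟨m, j⟩ hne
  have hkj : (n, (k : ℕ)) ≠ (m, (j : ℕ)) := by
    rintro h
    obtain ⟨rfl, h⟩ := Prod.mk.inj h
    exact hne (by rw [Fin.val_inj.1 h])
  exact removedInterval_disjoint k.2 j.2 hkj

theorem infDist_eq_min_of_disjoint_Ioo {S : Set ℝ} {l r y : ℝ} (hl : l ∈ S) (hr : r ∈ S)
    (hS : Disjoint S (Ioo l r)) (hy : y ∈ Ioo l r) :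
    Metric.infDist y S = min (y - l) (r - y) := by
  refine le_antisymm (le_min ?_ ?_) ((Metric.le_infDist ⟨l, hl⟩).2 fun z hz => ?_)
  · refine (Metric.infDist_le_dist_of_mem hl).trans_eq ?_
    rw [Real.dist_eq, abs_of_pos (by linarith [hy.1])]
  · refine (Metric.infDist_le_dist_of_mem hr).trans_eq ?_
    rw [Real.dist_eq, abs_of_neg (by linarith [hy.2]), neg_sub]
  have hz' : z ∉ Ioo l r := Set.disjoint_left.1 hS hz
  rw [Real.dist_eq]
  rcases le_or_gt z l with hzl | hzl
  · exact (min_le_left _ _).trans ((by linarith : y - l ≤ y - z).trans (le_abs_self _))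
  · have hrz : r ≤ z := not_lt.1 fun hzr => hz' ⟨hzl, hzr⟩
    exact (min_le_right _ _).trans ((by linarith [hy.2] : r - y ≤ -(y - z)).trans (neg_le_abs _))

theorem mem_cantorThirdsSet_iff {y : ℝ} :
    y ∈ cantorThirdsSet ↔
      y ∈ Icc 0 1 ∧ ∀ p : (n : ℕ) × Fin (2 ^ n), y ∉ removedInterval p.1 p.2 := by
  simp [cantorThirdsSet, Sigma.forall, Fin.forall_iff]

theorem cantorLeft_mem_cantorThirdsSet (p : (n : ℕ) × Fin (2 ^ n)) :
    cantorLeft p.1 p.2 ∈ cantorThirdsSet := by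
  refine mem_cantorThirdsSet_iff.2 ⟨⟨cantorLeft_nonneg _ _, ?_⟩, fun q => ?_⟩
  · exact (cantorLeft_lt_cantorRight _ _).le.trans (cantorRight_le_one _ _)
  · exact left_notMem_Ioo_of_pairwise_disjoint
      (a := fun q : (n : ℕ) × Fin (2 ^ n) => cantorLeft q.1 q.2)
      (b := fun q => cantorRight q.1 q.2) (fun q => cantorLeft_lt_cantorRight q.1 q.2)
      pairwise_disjoint_removedInterval p q

theorem cantorRight_mem_cantorThirdsSet (p : (n : ℕ) × Fin (2 ^ n)) :
    cantorRight p.1 p.2 ∈ cantorThirdsSet := by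
  refine mem_cantorThirdsSet_iff.2 ⟨⟨?_, cantorRight_le_one _ _⟩, fun q => ?_⟩
  · exact (cantorLeft_nonneg _ _).trans (cantorLeft_lt_cantorRight _ _).le
  · exact right_notMem_Ioo_of_pairwise_disjoint
      (a := fun q : (n : ℕ) × Fin (2 ^ n) => cantorLeft q.1 q.2)
      (b := fun q => cantorRight q.1 q.2) (fun q => cantorLeft_lt_cantorRight q.1 q.2)
      pairwise_disjoint_removedInterval p q

theorem isSumOfTents_cantor {b : ℕ → ℝ} (hb : ∀ n, 0 ≤ b n) {x : ℝ → ℝ}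
    (hxC : ∀ s ∈ cantorThirdsSet, x s = 0)
    (hxI : ∀ n k : ℕ, k < 2 ^ n → ∀ s ∈ removedInterval n k,
      x s = 2 * 3 ^ (n + 1) * b n * Metric.infDist s cantorThirdsSet) :
    IsSumOfTents x 0 1 (fun p : (n : ℕ) × Fin (2 ^ n) => cantorLeft p.1 p.2)
      (fun p => cantorRight p.1 p.2) (fun p => b p.1) where
  lt p := cantorLeft_lt_cantorRight p.1 p.2
  le_left p := cantorLeft_nonneg p.1 p.2
  right_le p := cantorRight_le_one p.1 p.2
  pairwise_disjoint := pairwise_disjoint_removedInterval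
  height_nonneg p := hb p.1
  eq_tent p y hy := by
    have hgap : Disjoint cantorThirdsSet (Ioo (cantorLeft p.1 p.2) (cantorRight p.1 p.2)) :=
      Set.disjoint_left.2 fun z hz => (mem_cantorThirdsSet_iff.1 hz).2 p
    rw [hxI p.1 p.2 p.2.2 y hy, infDist_eq_min_of_disjoint_Ioo (cantorLeft_mem_cantorThirdsSet p)
      (cantorRight_mem_cantorThirdsSet p) hgap hy, tent, cantorRight, add_sub_cancel_left,
      three_zpow_neg, div_inv_eq_mul]
    ring
  eq_zero y hy hy' := hxC y (mem_cantorThirdsSet_iff.2 ⟨hy, hy'⟩)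

theorem truncVar_cantorTent_general (b : ℕ → ℝ) (hbpos : ∀ n, 0 < b n)
    (x : ℝ → ℝ) (hxC : ∀ s ∈ cantorThirdsSet, x s = 0)
    (hxI : ∀ n k : ℕ, k < 2 ^ n → ∀ s ∈ removedInterval n k,
      x s = 2 * 3 ^ (n + 1) * b n * Metric.infDist s cantorThirdsSet)
    (c : ℝ) (hc : 0 < c) :
    truncVar x c 0 1 = ∑' n : ℕ, 2 ^ (n + 1) * ENNReal.ofReal (max (b n - c) 0) := by
  rw [(isSumOfTents_cantor (fun n => (hbpos n).le) hxC hxI).truncVar_eq hc.le,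
    ENNReal.tsum_sigma']
  refine tsum_congr fun n => ?_
  simp only [tsum_fintype, Finset.sum_const, Finset.card_univ, Fintype.card_fin, nsmul_eq_mul,
    ENNReal.ofReal_max, ENNReal.ofReal_zero, max_zero]
  push_cast
  ring

/-- For the Cantor tent function `x²` with tent heights `bₙ`,
`TV^c(x²,[0,1]) = Σₙ 2^{n+1}·max(bₙ − c, 0)` for every `c > 0`. -/
theorem truncVar_cantorTent (b : ℕ → ℝ) (hb : Antitone b) (hbpos : ∀ n, 0 < b n)
    (hblim : Tendsto b atTop (nhds 0))
    (hbdiv : ¬ Summable (fun n => (2 : ℝ) ^ n * b n))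
    (x : ℝ → ℝ) (hxC : ∀ s ∈ cantorThirdsSet, x s = 0)
    (hxI : ∀ n k : ℕ, k < 2 ^ n → ∀ s ∈ removedInterval n k,
      x s = 2 * 3 ^ (n + 1) * b n * Metric.infDist s cantorThirdsSet)
    (c : ℝ) (hc : 0 < c) :
    truncVar x c 0 1 = ∑' n : ℕ, 2 ^ (n + 1) * ENNReal.ofReal (max (b n - c) 0) :=
  truncVar_cantorTent_general b hbpos x hxC hxI c hc
end

section
/- Let x² be the Cantor tent function built from a nonincreasing positive sequence (bₙ) with bₙ → 0, and for t ∈ [0,1] let k_n(t) be the number of level-n removed intervals I_{n,k} entirely contained in [0,t]. Then for every c > 0 and t ∈ [0,1], Σ_{n≥0} 2·k_n(t)·max(bₙ − c, 0) ≤ TV^c(x²,[0,t]) ≤ Σ_{n≥0} 2·(k_n(t) + 1)·max(bₙ − c, 0). -/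
/-!
Lower bound: the removed intervals of levels `< N` that lie in `[0, t]` are pairwise disjoint,
truncated variation is superadditive over disjoint subintervals, and on a single tent of height
`h` the partition through its ends and its peak already collects `2 (h - c)⁺`.

Upper bound: fix a partition of `[0, t]`. A step rising by more than `c` ends inside a removed
interval, where `x²` is unimodal; the rising steps ending in one tent of height `bₙ` occupy
non-overlapping ranges of values in `[0, bₙ]`, so together they gain at most `bₙ - c`. Falling
steps are handled symmetrically. At most one removed interval per level meets `[0, t]` without
lying in it.
-/

open scoped ENNReal
open Filter

open Set Finset

section TruncVar

variable {x : ℝ → ℝ} {c s r t : ℝ}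

lemma sum_le_truncVar_s16 {n : ℕ} {u : Fin (n + 1) → ℝ} (hu : Monotone u) (hu0 : u 0 = s)
    (hut : u (Fin.last n) = t) :
    ∑ i : Fin n, ENNReal.ofReal (|x (u i.succ) - x (u i.castSucc)| - c) ≤ truncVar x c s t :=
  le_iSup_of_le n <| le_iSup_of_le u <| le_iSup_of_le hu <| le_iSup_of_le hu0 <|
    le_iSup_of_le hut le_rfl

lemma truncVar_le {B : ℝ≥0∞}
    (h : ∀ (n : ℕ) (u : Fin (n + 1) → ℝ), Monotone u → u 0 = s → u (Fin.last n) = t →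
      ∑ i : Fin n, ENNReal.ofReal (|x (u i.succ) - x (u i.castSucc)| - c) ≤ B) :
    truncVar x c s t ≤ B :=
  iSup_le fun n => iSup_le fun u => iSup_le fun hu => iSup_le fun hu0 => iSup_le (h n u hu hu0)

lemma monotone_vecCons_two {a b : ℝ} (hab : a ≤ b) : Monotone ![a, b] :=
  Fin.monotone_iff_le_succ.mpr fun i => by fin_cases i; simpa using hab

lemma ofReal_le_truncVar (hst : s ≤ t) :
    ENNReal.ofReal (|x t - x s| - c) ≤ truncVar x c s t := by
  simpa using sum_le_truncVar_s16 (n := 1) (u := ![s, t]) (x := x) (c := c)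
    (monotone_vecCons_two hst) rfl rfl

/-- Concatenating a partition of `[s, r]` with one of `[r, t]` gives a partition of `[s, t]`. -/
lemma sum_add_sum_le_truncVar {n m : ℕ} {u : Fin (n + 1) → ℝ} {v : Fin (m + 1) → ℝ}
    (hu : Monotone u) (hv : Monotone v) (hu0 : u 0 = s) (huv : u (Fin.last n) = v 0)
    (hvt : v (Fin.last m) = t) :
    ∑ i : Fin n, ENNReal.ofReal (|x (u i.succ) - x (u i.castSucc)| - c) +
        ∑ j : Fin m, ENNReal.ofReal (|x (v j.succ) - x (v j.castSucc)| - c) ≤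
      truncVar x c s t := by
  let w : Fin (n + m + 1) → ℝ := fun i =>
    if h : (i : ℕ) ≤ n then u ⟨i, by omega⟩ else v ⟨i - n, by omega⟩
  have hwu : ∀ (i : ℕ) (hi : i ≤ n), w ⟨i, by omega⟩ = u ⟨i, by omega⟩ :=
    fun i hi => dif_pos hi
  have hwv : ∀ (j : ℕ) (hj : j ≤ m), w ⟨n + j, by omega⟩ = v ⟨j, by omega⟩ := by
    intro j hj
    rcases j.eq_zero_or_pos with rfl | hj0
    · exact (dif_pos le_rfl).trans huv
    · exact (dif_neg (by simp; omega)).trans (by simp)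
  have hw : Monotone w := by
    refine Fin.monotone_iff_le_succ.mpr fun i => ?_
    by_cases hi : (i : ℕ) < n
    · rw [show w i.castSucc = u ⟨i, by omega⟩ from hwu i (by omega),
        show w i.succ = u ⟨i + 1, by omega⟩ from hwu (i + 1) hi]
      exact hu (Fin.mk_le_mk.mpr (by omega))
    · obtain ⟨j, hj⟩ : ∃ j, (i : ℕ) = n + j := ⟨i - n, by omega⟩
      rw [show w i.castSucc = v ⟨j, by omega⟩ by
          rw [← hwv j (by omega)]; congr 1; ext; simp [hj],
        show w i.succ = v ⟨j + 1, by omega⟩ by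
          rw [← hwv (j + 1) (by omega)]; congr 1; ext; simp [hj]; omega]
      exact hv (Fin.mk_le_mk.mpr (by omega))
  refine le_trans (le_of_eq ?_) (sum_le_truncVar_s16 hw ((hwu 0 (by omega)).trans hu0)
    ((hwv m le_rfl).trans hvt))
  rw [Fin.sum_univ_add]
  congr 1
  · refine Fintype.sum_congr _ _ fun i => ?_
    rw [show w (Fin.castAdd m i).succ = u i.succ from hwu (i + 1) i.isLt,
      show w (Fin.castAdd m i).castSucc = u i.castSucc from hwu i i.isLt.le]
  · refine Fintype.sum_congr _ _ fun j => ?_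
    rw [show w (Fin.natAdd n j).succ = v j.succ from hwv (j + 1) j.isLt,
      show w (Fin.natAdd n j).castSucc = v j.castSucc from hwv j j.isLt.le]

lemma truncVar_eq_iSup_sigma : truncVar x c s t =
    ⨆ p : Σ n, (Fin (n + 1) → ℝ),
      ⨆ (_ : Monotone p.2 ∧ p.2 0 = s ∧ p.2 (Fin.last p.1) = t), ∑ i : Fin p.1,
        ENNReal.ofReal (|x (p.2 i.succ) - x (p.2 i.castSucc)| - c) := by
  simp only [truncVar, iSup_sigma, iSup_and]

lemma truncVar_add_le (hsr : s ≤ r) (hrt : r ≤ t) :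
    truncVar x c s r + truncVar x c r t ≤ truncVar x c s t := by
  rw [truncVar_eq_iSup_sigma, truncVar_eq_iSup_sigma]
  exact ENNReal.biSup_add_biSup_le' ⟨⟨1, ![s, r]⟩, monotone_vecCons_two hsr, rfl, rfl⟩
    ⟨⟨1, ![r, t]⟩, monotone_vecCons_two hrt, rfl, rfl⟩
    fun ⟨_, u⟩ ⟨hu, hu0, hur⟩ ⟨_, v⟩ ⟨hv, hv0, hvt⟩ =>
      sum_add_sum_le_truncVar hu hv hu0 (hur.trans hv0.symm) hvt

lemma sum_truncVar_le_truncVar {ι : Type*} (S : Finset ι) (l r : ι → ℝ)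
    (hS : ∀ p ∈ S, s ≤ l p ∧ l p ≤ r p ∧ r p ≤ t)
    (hdisj : (S : Set ι).PairwiseDisjoint fun p => Icc (l p) (r p)) :
    ∑ p ∈ S, truncVar x c (l p) (r p) ≤ truncVar x c s t := by
  classical
  induction S using Finset.induction_on_max_value l generalizing t with
  | empty => simp
  | insert a S haS hmax ih =>
    obtain ⟨hsa, hlra, hrat⟩ := hS a (mem_insert_self a S)
    have hleft : ∀ q ∈ S, s ≤ l q ∧ l q ≤ r q ∧ r q ≤ l a := fun q hq => by
      obtain ⟨hsq, hlrq, -⟩ := hS q (mem_insert_of_mem hq)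
      refine ⟨hsq, hlrq, not_lt.mp fun hlt => ?_⟩
      have hqa : q ≠ a := fun h => haS (h ▸ hq)
      exact Set.disjoint_left.mp (hdisj (by simp [hq]) (by simp) hqa) ⟨hmax q hq, hlt.le⟩
        ⟨le_rfl, hlra⟩
    calc ∑ p ∈ insert a S, truncVar x c (l p) (r p)
        = truncVar x c (l a) (r a) + ∑ p ∈ S, truncVar x c (l p) (r p) := sum_insert haS
      _ ≤ truncVar x c s (l a) + truncVar x c (l a) (r a) := by
          rw [add_comm]
          gcongr
          exact ih hleft (hdisj.subset (by simp))
      _ ≤ truncVar x c s (r a) + truncVar x c (r a) t :=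
          (truncVar_add_le hsa hlra).trans le_self_add
      _ ≤ truncVar x c s t := truncVar_add_le (hsa.trans hlra) hrat

end TruncVar

def IsTentOn (x : ℝ → ℝ) (K l r : ℝ) : Prop :=
  ∀ y ∈ Icc l r, x y = K * min (y - l) (r - y)

namespace IsTentOn

variable {x : ℝ → ℝ} {K l r : ℝ}

lemma monotoneOn (hx : IsTentOn x K l r) (hK : 0 ≤ K) : MonotoneOn x (Icc l ((l + r) / 2)) := by
  intro y hy z hz hyz
  have hy' : y ∈ Icc l r := ⟨hy.1, by linarith [hy.2, hz.1, hz.2]⟩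
  have hz' : z ∈ Icc l r := ⟨hz.1, by linarith [hz.2, hy.1]⟩
  rw [hx y hy', hx z hz', min_eq_left (by linarith [hy.2, hz.2]),
    min_eq_left (by linarith [hy.2, hz.2])]
  gcongr

lemma antitoneOn (hx : IsTentOn x K l r) (hK : 0 ≤ K) : AntitoneOn x (Icc ((l + r) / 2) r) := by
  intro y hy z hz hyz
  have hy' : y ∈ Icc l r := ⟨by linarith [hy.1, hy.2], hy.2⟩
  have hz' : z ∈ Icc l r := ⟨by linarith [hz.1, hz.2], hz.2⟩
  rw [hx y hy', hx z hz', min_eq_right (by linarith [hy.1, hz.1]),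
    min_eq_right (by linarith [hy.1, hz.1])]
  gcongr

lemma apply_le (hx : IsTentOn x K l r) (hK : 0 ≤ K) {y : ℝ} (hy : y ∈ Icc l r) :
    x y ≤ K * ((r - l) / 2) := by
  rw [hx y hy]
  gcongr
  exact min_le_iff.mpr (by by_contra! h; linarith [h.1, h.2])

lemma two_mul_ofReal_le_truncVar (hx : IsTentOn x K l r) (hlr : l ≤ r) (c : ℝ) :
    2 * ENNReal.ofReal (K * ((r - l) / 2) - c) ≤ truncVar x c l r := by
  have hm : (l + r) / 2 ∈ Icc l r := ⟨by linarith, by linarith⟩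
  have hl : x l = 0 := by
    rw [hx l ⟨le_rfl, hlr⟩, sub_self, min_eq_left (sub_nonneg.2 hlr), mul_zero]
  have hr : x r = 0 := by
    rw [hx r ⟨hlr, le_rfl⟩, sub_self, min_eq_right (sub_nonneg.2 hlr), mul_zero]
  have hmid : x ((l + r) / 2) = K * ((r - l) / 2) := by
    rw [hx _ hm, show (l + r) / 2 - l = (r - l) / 2 by ring,
      show r - (l + r) / 2 = (r - l) / 2 by ring, min_self]
  have hstep : ENNReal.ofReal (K * ((r - l) / 2) - c) ≤
      ENNReal.ofReal (|K * ((r - l) / 2)| - c) :=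
    ENNReal.ofReal_le_ofReal (by linarith [le_abs_self (K * ((r - l) / 2))])
  calc 2 * ENNReal.ofReal (K * ((r - l) / 2) - c)
      ≤ ENNReal.ofReal (|x ((l + r) / 2) - x l| - c) +
          ENNReal.ofReal (|x r - x ((l + r) / 2)| - c) := by
        rw [two_mul, hl, hr, hmid, sub_zero, zero_sub, abs_neg]
        exact add_le_add hstep hstep
    _ ≤ truncVar x c l ((l + r) / 2) + truncVar x c ((l + r) / 2) r :=
        add_le_add (ofReal_le_truncVar hm.1) (ofReal_le_truncVar hm.2)
    _ ≤ truncVar x c l r := truncVar_add_le hm.1 hm.2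

end IsTentOn

lemma sum_sub_le_of_pairwiseDisjoint {ι : Type*} {T : Finset ι} {f g : ι → ℝ} {a b : ℝ}
    (hab : a ≤ b) (hT : ∀ i ∈ T, a ≤ g i ∧ g i ≤ f i ∧ f i ≤ b)
    (hdisj : (T : Set ι).PairwiseDisjoint fun i => Ioo (g i) (f i)) :
    ∑ i ∈ T, (f i - g i) ≤ b - a := by
  open MeasureTheory in
  have hvol : ENNReal.ofReal (∑ i ∈ T, (f i - g i)) ≤ ENNReal.ofReal (b - a) := calc
    ENNReal.ofReal (∑ i ∈ T, (f i - g i)) = ∑ i ∈ T, volume (Ioo (g i) (f i)) := by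
      rw [ENNReal.ofReal_sum_of_nonneg fun i hi => sub_nonneg.mpr (hT i hi).2.1]
      simp [Real.volume_Ioo]
    _ = volume (⋃ i ∈ T, Ioo (g i) (f i)) :=
      (measure_biUnion_finset hdisj fun _ _ => measurableSet_Ioo).symm
    _ ≤ volume (Icc a b) := measure_mono <| iUnion₂_subset fun i hi =>
      Ioo_subset_Icc_self.trans (Icc_subset_Icc (hT i hi).1 (hT i hi).2.2)
    _ = ENNReal.ofReal (b - a) := Real.volume_Icc
  exact (ENNReal.ofReal_le_ofReal_iff (sub_nonneg.mpr hab)).mp hvol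

/-- The ranges `(g i, f i)` are non-overlapping subintervals of `[0, B]`, and `c` is paid at
least once. -/
lemma sum_ofReal_sub_sub_le {ι : Type*} [LinearOrder ι] {T : Finset ι} {f g : ι → ℝ}
    {B c : ℝ} (hc : 0 ≤ c) (hT : ∀ i ∈ T, 0 ≤ g i ∧ c < f i - g i ∧ f i ≤ B)
    (hord : ∀ i ∈ T, ∀ j ∈ T, i < j → f i ≤ g j ∨ f j ≤ g i) :
    ∑ i ∈ T, ENNReal.ofReal (f i - g i - c) ≤ ENNReal.ofReal (B - c) := by
  rcases T.eq_empty_or_nonempty with rfl | ⟨i₀, hi₀⟩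
  · simp
  have hdisj : (T : Set ι).PairwiseDisjoint fun i => Ioo (g i) (f i) := by
    have hIoo : ∀ i ∈ T, ∀ j ∈ T, i < j → Disjoint (Ioo (g i) (f i)) (Ioo (g j) (f j)) :=
      fun i hi j hj hij => Set.Ioo_disjoint_Ioo.mpr <| (hord i hi j hj hij).elim
        (fun h => (min_le_left _ _).trans (h.trans (le_max_right _ _)))
        (fun h => (min_le_right _ _).trans (h.trans (le_max_left _ _)))
    intro i hi j hj hij
    rcases hij.lt_or_gt with h | h
    · exact hIoo i hi j hj h
    · exact (hIoo j hj i hi h).symm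
  have hlen := sum_sub_le_of_pairwiseDisjoint
    (le_trans (hT i₀ hi₀).1 (by linarith [hT i₀ hi₀]))
    (fun i hi => ⟨(hT i hi).1, by linarith [hT i hi], (hT i hi).2.2⟩) hdisj
  have hcard : c ≤ #T * c :=
    le_mul_of_one_le_left hc (by exact_mod_cast card_pos.mpr ⟨i₀, hi₀⟩)
  rw [← ENNReal.ofReal_sum_of_nonneg fun i hi => by linarith [hT i hi]]
  refine ENNReal.ofReal_le_ofReal ?_
  rw [sum_sub_distrib, sum_const, nsmul_eq_mul]
  linarith

lemma ofReal_abs_sub_eq_add {c : ℝ} (hc : 0 ≤ c) (a : ℝ) :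
    ENNReal.ofReal (|a| - c) = ENNReal.ofReal (a - c) + ENNReal.ofReal (-a - c) := by
  rcases le_total 0 a with ha | ha
  · rw [abs_of_nonneg ha, ENNReal.ofReal_of_nonpos (p := -a - c) (by linarith), add_zero]
  · rw [abs_of_nonpos ha, ENNReal.ofReal_of_nonpos (p := a - c) (by linarith), zero_add]

lemma sum_ofReal_sub_le_of_fiberwise {ι κ : Type*} [DecidableEq κ] {s : Finset ι}
    {Δ : ι → ℝ} {c : ℝ} {G : Finset κ} {F : κ → ℝ≥0∞} (gap : ι → κ)
    (hmaps : ∀ i ∈ s, c < Δ i → gap i ∈ G)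
    (hfib : ∀ p ∈ G,
      ∑ i ∈ s with c < Δ i ∧ gap i = p, ENNReal.ofReal (Δ i - c) ≤ F p) :
    ∑ i ∈ s, ENNReal.ofReal (Δ i - c) ≤ ∑ p ∈ G, F p := by
  rw [← sum_filter_of_ne (p := fun i => c < Δ i) fun i _ h =>
    sub_pos.mp (ENNReal.ofReal_pos.mp (pos_iff_ne_zero.mpr h)),
    ← sum_fiberwise_of_maps_to (g := gap) fun i hi =>
      hmaps i (mem_filter.mp hi).1 (mem_filter.mp hi).2]
  refine sum_le_sum fun p hp => le_of_eq_of_le ?_ (hfib p hp)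
  rw [filter_filter]

section Unimodal

variable {x : ℝ → ℝ} {m : ℕ} {u : Fin (m + 1) → ℝ} {l mid r B c : ℝ}

/-- A rising step must start on the increasing side of the bump, hence no lower than where any
earlier rising step into the bump ended. -/
lemma sum_ofReal_up_le_of_unimodal (hu : Monotone u) (hc : 0 ≤ c)
    (hmono : MonotoneOn x (Icc l mid)) (hanti : AntitoneOn x (Icc mid r))
    (hB : ∀ y ∈ Icc l r, x y ≤ B) (hx0 : ∀ i, 0 ≤ x (u i)) {T : Finset (Fin m)}
    (hT : ∀ i ∈ T, c < x (u i.succ) - x (u i.castSucc) ∧ u i.succ ∈ Icc l r) :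
    ∑ i ∈ T, ENNReal.ofReal (x (u i.succ) - x (u i.castSucc) - c) ≤
      ENNReal.ofReal (B - c) := by
  refine sum_ofReal_sub_sub_le hc (fun i hi => ⟨hx0 _, (hT i hi).1, hB _ (hT i hi).2⟩)
    fun i hi j hj hij => Or.inl ?_
  have h1 : u i.succ ≤ u j.castSucc := hu (Fin.succ_le_castSucc_iff.mpr hij)
  have h2 : u j.castSucc ≤ u j.succ := hu (Fin.castSucc_le_succ j)
  have hi' := (hT i hi).2
  have hj' := (hT j hj).2
  have hmid : u j.castSucc < mid := by
    by_contra! h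
    have := hanti ⟨h, h2.trans hj'.2⟩ ⟨h.trans h2, hj'.2⟩ h2
    linarith [(hT j hj).1]
  exact hmono ⟨hi'.1, h1.trans hmid.le⟩ ⟨hi'.1.trans h1, hmid.le⟩ h1

lemma sum_ofReal_down_le_of_unimodal (hu : Monotone u) (hc : 0 ≤ c)
    (hmono : MonotoneOn x (Icc l mid)) (hanti : AntitoneOn x (Icc mid r))
    (hB : ∀ y ∈ Icc l r, x y ≤ B) (hx0 : ∀ i, 0 ≤ x (u i)) {T : Finset (Fin m)}
    (hT : ∀ i ∈ T, c < x (u i.castSucc) - x (u i.succ) ∧ u i.castSucc ∈ Icc l r) :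
    ∑ i ∈ T, ENNReal.ofReal (x (u i.castSucc) - x (u i.succ) - c) ≤
      ENNReal.ofReal (B - c) := by
  refine sum_ofReal_sub_sub_le hc (fun i hi => ⟨hx0 _, (hT i hi).1, hB _ (hT i hi).2⟩)
    fun i hi j hj hij => Or.inr ?_
  have h1 : u i.succ ≤ u j.castSucc := hu (Fin.succ_le_castSucc_iff.mpr hij)
  have h2 : u i.castSucc ≤ u i.succ := hu (Fin.castSucc_le_succ i)
  have hi' := (hT i hi).2
  have hj' := (hT j hj).2
  have hmid : mid < u i.succ := by
    by_contra! h
    have := hmono ⟨hi'.1, h2.trans h⟩ ⟨hi'.1.trans h2, h⟩ h2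
    linarith [(hT i hi).1]
  exact hanti ⟨hmid.le, h1.trans hj'.2⟩ ⟨hmid.le.trans h1, hj'.2⟩ h1

end Unimodal

noncomputable def removedLength (n : ℕ) : ℝ := 3 ^ (-((n : ℤ) + 1))

lemma removedLength_pos (n : ℕ) : 0 < removedLength n := zpow_pos (by norm_num) _

lemma three_mul_removedLength_succ (n : ℕ) : 3 * removedLength (n + 1) = removedLength n := by
  rw [removedLength, removedLength, ← zpow_one_add₀ (by norm_num)]
  push_cast
  ring_nf

lemma three_pow_mul_removedLength (n : ℕ) : (3 : ℝ) ^ (n + 1) * removedLength n = 1 := by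
  rw [removedLength, ← zpow_natCast, ← zpow_add₀ (by norm_num)]
  push_cast
  simp

/-- Left end of the level-`n` Cantor cylinder of length `3⁻ⁿ` whose middle third is the
`k`-th removed interval of level `n`. -/
noncomputable def cantorCylinderLeft (n k : ℕ) : ℝ :=
  ∑ i ∈ range n, (if k.testBit (n - 1 - i) then (2 : ℝ) else 0) * removedLength i

lemma cantorLeft_eq_s16 (n k : ℕ) : cantorLeft n k = cantorCylinderLeft n k + removedLength n := rfl

lemma cantorCylinderLeft_nonneg (n k : ℕ) : 0 ≤ cantorCylinderLeft n k :=
  sum_nonneg fun i _ => mul_nonneg (by split_ifs <;> norm_num) (removedLength_pos i).le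

lemma cantorCylinderLeft_succ (n k : ℕ) :
    cantorCylinderLeft (n + 1) k =
      cantorCylinderLeft n (k / 2) + if k.testBit 0 then 2 * removedLength n else 0 := by
  rw [cantorCylinderLeft, sum_range_succ, Nat.add_sub_cancel, Nat.sub_self]
  congr 1
  · refine sum_congr rfl fun i hi => ?_
    rw [Nat.testBit_div_two, show n - 1 - i + 1 = n - i by grind]
  · split_ifs <;> ring

lemma cantorCylinderLeft_succ_bounds (n k : ℕ) :
    cantorCylinderLeft n (k / 2) ≤ cantorCylinderLeft (n + 1) k ∧
      cantorCylinderLeft (n + 1) k + 3 * removedLength (n + 1) ≤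
        cantorCylinderLeft n (k / 2) + 3 * removedLength n := by
  have := removedLength_pos n
  rw [cantorCylinderLeft_succ, three_mul_removedLength_succ]
  constructor <;> split_ifs <;> linarith

lemma cantorCylinderLeft_add_le_one {n k : ℕ} (hk : k < 2 ^ n) :
    cantorCylinderLeft n k + 3 * removedLength n ≤ 1 := by
  induction n generalizing k with
  | zero => simp [cantorCylinderLeft, removedLength]
  | succ n ih =>
    have := (cantorCylinderLeft_succ_bounds n k).2
    have := ih (k := k / 2) (by omega)
    linarith

lemma cantorCylinderLeft_add_le {n k k' : ℕ} (hk' : k' < 2 ^ n) (hkk' : k < k') :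
    cantorCylinderLeft n k + 3 * removedLength n ≤ cantorCylinderLeft n k' := by
  induction n generalizing k k' with
  | zero => omega
  | succ n ih =>
    have hβ := removedLength_pos n
    have h3 := three_mul_removedLength_succ n
    rw [cantorCylinderLeft_succ, cantorCylinderLeft_succ]
    rcases (Nat.div_le_div_right (c := 2) hkk'.le).lt_or_eq with hlt | heq
    · have := ih (by omega) hlt
      split_ifs <;> linarith
    · have hk0 : k.testBit 0 = false := by simp [Nat.testBit_zero]; omega
      have hk'0 : k'.testBit 0 = true := by simp [Nat.testBit_zero]; omega
      simp only [heq, hk0, hk'0, Bool.false_eq_true, if_false, if_true]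
      linarith

noncomputable def cantorCylinder (n k : ℕ) : Set ℝ :=
  Ioo (cantorCylinderLeft n k) (cantorCylinderLeft n k + 3 * removedLength n)

noncomputable def closedRemovedInterval (n k : ℕ) : Set ℝ :=
  Icc (cantorLeft n k) (cantorLeft n k + removedLength n)

lemma closedRemovedInterval_subset_cantorCylinder (n k : ℕ) :
    closedRemovedInterval n k ⊆ cantorCylinder n k := by
  have := removedLength_pos n
  exact Icc_subset_Ioo (by rw [cantorLeft_eq_s16]; linarith) (by rw [cantorLeft_eq_s16]; linarith)

lemma cantorCylinder_succ_subset (n k : ℕ) :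
    cantorCylinder (n + 1) k ⊆ cantorCylinder n (k / 2) :=
  Ioo_subset_Ioo (cantorCylinderLeft_succ_bounds n k).1 (cantorCylinderLeft_succ_bounds n k).2

lemma disjoint_cantorCylinder_succ (n k : ℕ) :
    Disjoint (cantorCylinder (n + 1) k) (closedRemovedInterval n (k / 2)) := by
  have := removedLength_pos n
  have := three_mul_removedLength_succ n
  rw [Set.disjoint_left]
  rintro y ⟨h1, h2⟩ ⟨h3, h4⟩
  rw [cantorCylinderLeft_succ] at h1 h2
  rw [cantorLeft_eq_s16] at h3 h4
  split_ifs at h1 h2 <;> linarith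

lemma disjoint_cantorCylinder_of_ne {n k k' : ℕ} (hk : k < 2 ^ n) (hk' : k' < 2 ^ n)
    (hne : k' ≠ k) : Disjoint (cantorCylinder n k') (closedRemovedInterval n k) := by
  have := removedLength_pos n
  rw [Set.disjoint_left]
  rintro y ⟨h1, h2⟩ ⟨h3, h4⟩
  rw [cantorLeft_eq_s16] at h3 h4
  rcases hne.lt_or_gt with h | h
  · linarith [cantorCylinderLeft_add_le hk h]
  · linarith [cantorCylinderLeft_add_le hk' h]

lemma disjoint_cantorCylinder_of_lt {n n' k k' : ℕ} (hnn' : n < n') (hk : k < 2 ^ n)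
    (hk' : k' < 2 ^ n') : Disjoint (cantorCylinder n' k') (closedRemovedInterval n k) := by
  induction n', hnn' using Nat.le_induction generalizing k' with
  | base =>
    rcases eq_or_ne (k' / 2) k with rfl | hne
    · exact disjoint_cantorCylinder_succ n k'
    · exact (disjoint_cantorCylinder_of_ne hk (by omega) hne).mono_left
        (cantorCylinder_succ_subset n k')
  | succ n' _ ih =>
    exact (ih (k' := k' / 2) (by omega)).mono_left (cantorCylinder_succ_subset n' k')

lemma disjoint_closedRemovedInterval {n n' k k' : ℕ} (hk : k < 2 ^ n) (hk' : k' < 2 ^ n')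
    (hne : (n, k) ≠ (n', k')) :
    Disjoint (closedRemovedInterval n k) (closedRemovedInterval n' k') := by
  rcases lt_trichotomy n n' with h | rfl | h
  · exact ((disjoint_cantorCylinder_of_lt h hk hk').mono_left
      (closedRemovedInterval_subset_cantorCylinder n' k')).symm
  · exact ((disjoint_cantorCylinder_of_ne hk hk' (by grind)).mono_left
      (closedRemovedInterval_subset_cantorCylinder n k')).symm
  · exact (disjoint_cantorCylinder_of_lt h hk' hk).mono_left
      (closedRemovedInterval_subset_cantorCylinder n k)

lemma closedRemovedInterval_subset_Icc {n k : ℕ} (hk : k < 2 ^ n) :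
    closedRemovedInterval n k ⊆ Icc 0 1 := by
  have := removedLength_pos n
  have := cantorCylinderLeft_nonneg n k
  have := cantorCylinderLeft_add_le_one hk
  exact Icc_subset_Icc (by rw [cantorLeft_eq_s16]; linarith) (by rw [cantorLeft_eq_s16]; linarith)

lemma mem_cantorThirdsSet {n k : ℕ} (hk : k < 2 ^ n) {y : ℝ}
    (hy : y ∈ closedRemovedInterval n k) (hy' : y ∉ removedInterval n k) :
    y ∈ cantorThirdsSet := by
  refine ⟨closedRemovedInterval_subset_Icc hk hy, ?_⟩
  simp only [mem_iUnion, not_exists]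
  intro n' k' hk' hy''
  have hne : (n, k) ≠ (n', k') := by
    rintro ⟨⟩
    exact hy' hy''
  exact Set.disjoint_left.mp (disjoint_closedRemovedInterval hk hk' hne) hy
    (Ioo_subset_Icc_self hy'')

lemma infDist_cantorThirdsSet {n k : ℕ} (hk : k < 2 ^ n) {y : ℝ}
    (hy : y ∈ closedRemovedInterval n k) :
    Metric.infDist y cantorThirdsSet =
      min (y - cantorLeft n k) (cantorLeft n k + removedLength n - y) := by
  have hβ := removedLength_pos n
  have hl : cantorLeft n k ∈ cantorThirdsSet :=
    mem_cantorThirdsSet hk ⟨le_rfl, by linarith⟩ fun h => h.1.false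
  have hr : cantorLeft n k + removedLength n ∈ cantorThirdsSet :=
    mem_cantorThirdsSet hk ⟨by linarith, le_rfl⟩ fun h => h.2.false
  refine le_antisymm ?_ ((Metric.le_infDist ⟨_, hl⟩).mpr fun z hz => ?_)
  · refine le_min ?_ ?_
    · simpa [Real.dist_eq, abs_of_nonneg (sub_nonneg.mpr hy.1)] using
        Metric.infDist_le_dist_of_mem (x := y) hl
    · simpa [Real.dist_eq, abs_of_nonpos (sub_nonpos.mpr hy.2)] using
        Metric.infDist_le_dist_of_mem (x := y) hr
  · have hz' : z ∉ removedInterval n k := fun h =>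
      hz.2 (mem_iUnion.mpr ⟨n, mem_iUnion.mpr ⟨k, mem_iUnion.mpr ⟨hk, h⟩⟩⟩)
    rw [Real.dist_eq]
    by_cases hzl : z ≤ cantorLeft n k
    · exact (min_le_left _ _).trans (by rw [abs_of_nonneg (by linarith [hy.1])]; linarith)
    · have hzr : cantorLeft n k + removedLength n ≤ z := by
        by_contra h
        exact hz' ⟨lt_of_not_ge hzl, lt_of_not_ge h⟩
      exact (min_le_right _ _).trans (by rw [abs_of_nonpos (by linarith [hy.2])]; linarith)

lemma card_filter_cantorLeft_lt_le (n : ℕ) (t : ℝ) :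
    #{k ∈ range (2 ^ n) | cantorLeft n k < t} ≤ levelCount n t + 1 := by
  let full := {k ∈ range (2 ^ n) | cantorLeft n k + (3 : ℝ) ^ (-((n : ℤ) + 1)) ≤ t}
  have hpartial : #({k ∈ range (2 ^ n) | cantorLeft n k < t} \ full) ≤ 1 := by
    refine card_le_one.mpr fun k hk k' hk' => by_contra fun hne => ?_
    simp only [full, Finset.mem_sdiff, mem_filter, Finset.mem_range, not_and, not_le] at hk hk'
    exact Set.disjoint_left.mp (disjoint_closedRemovedInterval hk.1.1 hk'.1.1 (by simpa using hne))
      ⟨hk.1.2.le, (hk.2 hk.1.1).le⟩ ⟨hk'.1.2.le, (hk'.2 hk'.1.1).le⟩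
  have hfull : levelCount n t = #full := rfl
  have := card_le_card_sdiff_add_card (s := {k ∈ range (2 ^ n) | cantorLeft n k < t}) (t := full)
  omega

lemma sum_le_tsum_levelCount {t : ℝ} (G : Finset (ℕ × ℕ))
    (hG : ∀ p ∈ G, p.2 < 2 ^ p.1 ∧ cantorLeft p.1 p.2 < t) (F : ℕ → ℝ≥0∞) :
    ∑ p ∈ G, F p.1 ≤ ∑' n, ((levelCount n t : ℝ≥0∞) + 1) * F n := by
  classical
  rw [sum_comp]
  refine (sum_le_sum fun n _ => ?_).trans (ENNReal.sum_le_tsum _)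
  rw [nsmul_eq_mul]
  gcongr
  have hfiber : #{p ∈ G | p.1 = n} ≤ #{k ∈ range (2 ^ n) | cantorLeft n k < t} :=
    card_le_card_of_injOn Prod.snd
      (fun p hp => by
        obtain ⟨hpG, rfl⟩ := mem_filter.mp hp
        simpa using hG p hpG)
      (fun p hp q hq h => Prod.ext ((mem_filter.mp hp).2.trans (mem_filter.mp hq).2.symm) h)
  exact_mod_cast hfiber.trans (card_filter_cantorLeft_lt_le n t)

lemma cantorTent_height (n k : ℕ) (a : ℝ) :
    2 * 3 ^ (n + 1) * a * ((cantorLeft n k + removedLength n - cantorLeft n k) / 2) = a := by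
  linear_combination a * three_pow_mul_removedLength n

/-- The function `x²` of the paper: zero on the Cantor set and a tent of height `b n` on each
removed interval of level `n`. -/
structure IsCantorTent (b : ℕ → ℝ) (x : ℝ → ℝ) : Prop where
  eq_zero : ∀ s ∈ cantorThirdsSet, x s = 0
  eq_removed : ∀ n k : ℕ, k < 2 ^ n → ∀ s ∈ removedInterval n k,
    x s = 2 * 3 ^ (n + 1) * b n * Metric.infDist s cantorThirdsSet

namespace IsCantorTent

variable {b : ℕ → ℝ} {x : ℝ → ℝ} {n k : ℕ} {c : ℝ} {m : ℕ} {u : Fin (m + 1) → ℝ}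
  {G : Finset (ℕ × ℕ)} {gap : Fin (m + 1) → ℕ × ℕ}

lemma isTentOn (hx : IsCantorTent b x) (hk : k < 2 ^ n) :
    IsTentOn x (2 * 3 ^ (n + 1) * b n) (cantorLeft n k) (cantorLeft n k + removedLength n) := by
  intro y hy
  rw [← infDist_cantorThirdsSet hk hy]
  by_cases hy' : y ∈ removedInterval n k
  · exact hx.eq_removed n k hk y hy'
  · have hC := mem_cantorThirdsSet hk hy hy'
    rw [hx.eq_zero y hC, Metric.infDist_zero_of_mem hC, mul_zero]

lemma nonneg (hx : IsCantorTent b x) (hb : ∀ n, 0 ≤ b n) {y : ℝ} (hy : y ∈ Set.Icc 0 1) :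
    0 ≤ x y := by
  by_cases hC : y ∈ cantorThirdsSet
  · exact (hx.eq_zero y hC).ge
  · obtain ⟨n, k, hk, hyk⟩ : ∃ n k, k < 2 ^ n ∧ y ∈ removedInterval n k := by
      simpa [cantorThirdsSet, hy.1, hy.2] using hC
    rw [hx.eq_removed n k hk y hyk]
    exact mul_nonneg (by have := hb n; positivity) Metric.infDist_nonneg

lemma exists_removedInterval (hx : IsCantorTent b x) {y : ℝ} (hy : y ∈ Set.Icc 0 1)
    (hxy : x y ≠ 0) : ∃ p : ℕ × ℕ, p.2 < 2 ^ p.1 ∧ y ∈ removedInterval p.1 p.2 := by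
  have hC : y ∉ cantorThirdsSet := fun hC => hxy (hx.eq_zero y hC)
  simpa [cantorThirdsSet, hy.1, hy.2] using hC

lemma two_mul_ofReal_le_truncVar (hx : IsCantorTent b x) (hk : k < 2 ^ n) :
    2 * ENNReal.ofReal (b n - c) ≤
      truncVar x c (cantorLeft n k) (cantorLeft n k + removedLength n) := by
  simpa only [cantorTent_height] using
    (hx.isTentOn hk).two_mul_ofReal_le_truncVar (by linarith [removedLength_pos n]) c

lemma tsum_le_truncVar (hx : IsCantorTent b x) {t : ℝ} :
    ∑' n : ℕ, 2 * (levelCount n t : ℝ≥0∞) * ENNReal.ofReal (max (b n - c) 0) ≤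
      truncVar x c 0 t := by
  refine ENNReal.tsum_le_of_sum_range_le fun N => ?_
  let S := (range N).sigma fun n =>
    (range (2 ^ n)).filter fun k => cantorLeft n k + removedLength n ≤ t
  have hS : ∀ p ∈ S, p.2 < 2 ^ p.1 ∧ cantorLeft p.1 p.2 + removedLength p.1 ≤ t := by
    simp [S]
  calc ∑ n ∈ range N, 2 * (levelCount n t : ℝ≥0∞) * ENNReal.ofReal (max (b n - c) 0)
      = ∑ p ∈ S, 2 * ENNReal.ofReal (b p.1 - c) := by
        rw [sum_sigma]
        refine sum_congr rfl fun n _ => ?_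
        dsimp only
        rw [sum_const, nsmul_eq_mul, ENNReal.ofReal_max, ENNReal.ofReal_zero, _root_.max_zero]
        unfold levelCount removedLength
        ring
    _ ≤ ∑ p ∈ S, truncVar x c (cantorLeft p.1 p.2) (cantorLeft p.1 p.2 + removedLength p.1) :=
        sum_le_sum fun p hp => hx.two_mul_ofReal_le_truncVar (hS p hp).1
    _ ≤ truncVar x c 0 t := by
        refine sum_truncVar_le_truncVar S _ _ (fun p hp => ⟨?_, ?_, (hS p hp).2⟩) ?_
        · rw [cantorLeft_eq_s16]
          linarith [cantorCylinderLeft_nonneg p.1 p.2, removedLength_pos p.1]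
        · linarith [removedLength_pos p.1]
        · intro p hp q hq hpq
          refine disjoint_closedRemovedInterval (hS p hp).1 (hS q hq).1 fun h => hpq ?_
          simp_all [Sigma.ext_iff]

lemma sum_ofReal_up_le (hx : IsCantorTent b x) (hb : ∀ n, 0 ≤ b n) (hc : 0 ≤ c)
    (hu : Monotone u) (hx0 : ∀ i, 0 ≤ x (u i))
    (hgap : ∀ i, 0 < x (u i) → gap i ∈ G ∧ u i ∈ removedInterval (gap i).1 (gap i).2)
    (hG : ∀ p ∈ G, p.2 < 2 ^ p.1) :
    ∑ i : Fin m, ENNReal.ofReal (x (u i.succ) - x (u i.castSucc) - c) ≤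
      ∑ p ∈ G, ENNReal.ofReal (b p.1 - c) := by
  have hpos : ∀ i : Fin m, c < x (u i.succ) - x (u i.castSucc) → 0 < x (u i.succ) :=
    fun i hi => by linarith [hx0 i.castSucc]
  refine sum_ofReal_sub_le_of_fiberwise (gap ∘ Fin.succ)
    (fun i _ hi => (hgap _ (hpos i hi)).1) fun p hp => ?_
  have htent := hx.isTentOn (hG p hp)
  have hK : 0 ≤ 2 * 3 ^ (p.1 + 1) * b p.1 := by have := hb p.1; positivity
  rw [← cantorTent_height p.1 p.2 (b p.1)]
  refine sum_ofReal_up_le_of_unimodal hu hc (htent.monotoneOn hK) (htent.antitoneOn hK)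
    (fun y hy => htent.apply_le hK hy) hx0 fun i hi => ?_
  obtain ⟨hci, rfl⟩ : c < x (u i.succ) - x (u i.castSucc) ∧ gap i.succ = p := by
    simpa using hi
  exact ⟨hci, Ioo_subset_Icc_self (hgap _ (hpos i hci)).2⟩

lemma sum_ofReal_down_le (hx : IsCantorTent b x) (hb : ∀ n, 0 ≤ b n) (hc : 0 ≤ c)
    (hu : Monotone u) (hx0 : ∀ i, 0 ≤ x (u i))
    (hgap : ∀ i, 0 < x (u i) → gap i ∈ G ∧ u i ∈ removedInterval (gap i).1 (gap i).2)
    (hG : ∀ p ∈ G, p.2 < 2 ^ p.1) :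
    ∑ i : Fin m, ENNReal.ofReal (x (u i.castSucc) - x (u i.succ) - c) ≤
      ∑ p ∈ G, ENNReal.ofReal (b p.1 - c) := by
  have hpos : ∀ i : Fin m, c < x (u i.castSucc) - x (u i.succ) → 0 < x (u i.castSucc) :=
    fun i hi => by linarith [hx0 i.succ]
  refine sum_ofReal_sub_le_of_fiberwise (gap ∘ Fin.castSucc)
    (fun i _ hi => (hgap _ (hpos i hi)).1) fun p hp => ?_
  have htent := hx.isTentOn (hG p hp)
  have hK : 0 ≤ 2 * 3 ^ (p.1 + 1) * b p.1 := by have := hb p.1; positivity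
  rw [← cantorTent_height p.1 p.2 (b p.1)]
  refine sum_ofReal_down_le_of_unimodal hu hc (htent.monotoneOn hK) (htent.antitoneOn hK)
    (fun y hy => htent.apply_le hK hy) hx0 fun i hi => ?_
  obtain ⟨hci, rfl⟩ : c < x (u i.castSucc) - x (u i.succ) ∧ gap i.castSucc = p := by
    simpa using hi
  exact ⟨hci, Ioo_subset_Icc_self (hgap _ (hpos i hci)).2⟩

lemma sum_ofReal_abs_sub_le_tsum (hx : IsCantorTent b x) (hb : ∀ n, 0 ≤ b n) (hc : 0 ≤ c)
    {t : ℝ} (ht : t ≤ 1) (hu : Monotone u) (hu0 : u 0 = 0) (hut : u (Fin.last m) = t) :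
    ∑ i : Fin m, ENNReal.ofReal (|x (u i.succ) - x (u i.castSucc)| - c) ≤
      ∑' n : ℕ, 2 * ((levelCount n t : ℝ≥0∞) + 1) * ENNReal.ofReal (max (b n - c) 0) := by
  classical
  have hu01 : ∀ i, u i ∈ Set.Icc 0 1 := fun i =>
    ⟨hu0 ▸ hu (Fin.zero_le i), (hut ▸ hu (Fin.le_last i)).trans ht⟩
  have hx0 : ∀ i, 0 ≤ x (u i) := fun i => hx.nonneg hb (hu01 i)
  choose! gap hgap using fun i (hi : 0 < x (u i)) => hx.exists_removedInterval (hu01 i) hi.ne'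
  let G := (univ.filter fun i => 0 < x (u i)).image gap
  have hgapG : ∀ i, 0 < x (u i) → gap i ∈ G ∧ u i ∈ removedInterval (gap i).1 (gap i).2 :=
    fun i hi => ⟨mem_image_of_mem gap (by simpa using hi), (hgap i hi).2⟩
  have hG : ∀ p ∈ G, p.2 < 2 ^ p.1 ∧ cantorLeft p.1 p.2 < t := by
    intro p hp
    obtain ⟨i, hi, rfl⟩ := Finset.mem_image.mp hp
    replace hi : 0 < x (u i) := (mem_filter.mp hi).2
    exact ⟨(hgap i hi).1, (hgap i hi).2.1.trans_le (hut ▸ hu (Fin.le_last i))⟩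
  calc ∑ i : Fin m, ENNReal.ofReal (|x (u i.succ) - x (u i.castSucc)| - c)
      = ∑ i : Fin m, ENNReal.ofReal (x (u i.succ) - x (u i.castSucc) - c) +
          ∑ i : Fin m, ENNReal.ofReal (x (u i.castSucc) - x (u i.succ) - c) := by
        simp_rw [ofReal_abs_sub_eq_add hc, neg_sub]
        exact sum_add_distrib
    _ ≤ ∑ p ∈ G, ENNReal.ofReal (b p.1 - c) + ∑ p ∈ G, ENNReal.ofReal (b p.1 - c) :=
        add_le_add (hx.sum_ofReal_up_le hb hc hu hx0 hgapG fun p hp => (hG p hp).1)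
          (hx.sum_ofReal_down_le hb hc hu hx0 hgapG fun p hp => (hG p hp).1)
    _ = ∑ p ∈ G, 2 * ENNReal.ofReal (b p.1 - c) := by
        rw [← sum_add_distrib]
        simp_rw [two_mul]
    _ ≤ ∑' n : ℕ, ((levelCount n t : ℝ≥0∞) + 1) * (2 * ENNReal.ofReal (b n - c)) :=
        sum_le_tsum_levelCount G hG _
    _ = ∑' n : ℕ,
          2 * ((levelCount n t : ℝ≥0∞) + 1) * ENNReal.ofReal (max (b n - c) 0) := by
        refine tsum_congr fun n => ?_
        rw [ENNReal.ofReal_max, ENNReal.ofReal_zero, _root_.max_zero]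
        ring

end IsCantorTent

theorem truncVar_cantorTent_bounds_general (b : ℕ → ℝ)
    (hbpos : ∀ n, 0 < b n)
    (x : ℝ → ℝ) (hxC : ∀ s ∈ cantorThirdsSet, x s = 0)
    (hxI : ∀ n k : ℕ, k < 2 ^ n → ∀ s ∈ removedInterval n k,
      x s = 2 * 3 ^ (n + 1) * b n * Metric.infDist s cantorThirdsSet)
    (c : ℝ) (hc : 0 < c) (t : ℝ) (ht : t ∈ Set.Icc (0 : ℝ) 1) :
    (∑' n : ℕ, 2 * (levelCount n t : ℝ≥0∞) * ENNReal.ofReal (max (b n - c) 0)) ≤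
        truncVar x c 0 t ∧
      truncVar x c 0 t ≤
        ∑' n : ℕ, 2 * ((levelCount n t : ℝ≥0∞) + 1) * ENNReal.ofReal (max (b n - c) 0) := by
  have hx : IsCantorTent b x := ⟨hxC, hxI⟩
  refine ⟨hx.tsum_le_truncVar, truncVar_le fun m u hu hu0 hut => ?_⟩
  exact hx.sum_ofReal_abs_sub_le_tsum (fun n => (hbpos n).le) hc.le ht.2 hu hu0 hut

/-- For the Cantor tent function `x²` and any `c > 0`, `t ∈ [0,1]`:
`Σₙ 2·kₙ(t)·max(bₙ − c, 0) ≤ TV^c(x²,[0,t]) ≤ Σₙ 2·(kₙ(t)+1)·max(bₙ − c, 0)`. -/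
theorem truncVar_cantorTent_bounds (b : ℕ → ℝ) (hb : Antitone b)
    (hbpos : ∀ n, 0 < b n) (hblim : Tendsto b atTop (nhds 0))
    (x : ℝ → ℝ) (hxC : ∀ s ∈ cantorThirdsSet, x s = 0)
    (hxI : ∀ n k : ℕ, k < 2 ^ n → ∀ s ∈ removedInterval n k,
      x s = 2 * 3 ^ (n + 1) * b n * Metric.infDist s cantorThirdsSet)
    (c : ℝ) (hc : 0 < c) (t : ℝ) (ht : t ∈ Set.Icc (0 : ℝ) 1) :
    (∑' n : ℕ, 2 * (levelCount n t : ℝ≥0∞) * ENNReal.ofReal (max (b n - c) 0)) ≤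
        truncVar x c 0 t ∧
      truncVar x c 0 t ≤
        ∑' n : ℕ, 2 * ((levelCount n t : ℝ≥0∞) + 1) * ENNReal.ofReal (max (b n - c) 0) :=
  truncVar_cantorTent_bounds_general b hbpos x hxC hxI c hc t ht
end
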